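/- For any conjunction C of ground literals and ground comparisons, the infinitary propositional formula τC is equivalent to the first-order formula φC, in the sense that τC and φC are satisfied by exactly the same interpretations. -/

import Mathlib

namespace EG


/-! ### Relation symbols -/

inductive Rel : Type where
  | req | rne | rlt | rle | rgt | rge

/-- Evaluation of a relation symbol relative to a strict total order `lt`
on the domain (equality is genuine equality of domain elements). -/
def Rel.eval {α : Type} (lt : α → α → Prop) : Rel → α → α → Prop
  | .req, a, b => a = b
  | .rne, a, b => a ≠ b
  | .rlt, a, b => lt a b
  | .rle, a, b => lt a b ∨ a = b
  | .rgt, a, b => lt b a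
  | .rge, a, b => lt b a ∨ a = b

/-! ### Precomputed terms -/

/-- Precomputed terms over a type `C` of symbolic constants:
numerals, symbolic constants, `inf`, `sup`, and applications of a symbolic
constant to a tuple of precomputed terms. -/
inductive Pre (C : Type) : Type where
  | inf
  | sup
  | num (n : ℤ)
  | sym (c : C)
  | app (f : C) (args : List (Pre C))

/-- The assumed total order on precomputed terms: a strict total order with
`inf` least, `sup` greatest, in which numerals are ordered as the integers. -/
structure PreOrderOK {C : Type} (lt : Pre C → Pre C → Prop) : Prop where
  irrefl : ∀ a, ¬ lt a a
  trans : ∀ a b c, lt a b → lt b c → lt a c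
  total : ∀ a b, lt a b ∨ a = b ∨ lt b a
  inf_least : ∀ a, a ≠ Pre.inf → lt Pre.inf a
  sup_greatest : ∀ a, a ≠ Pre.sup → lt a Pre.sup
  num_iff : ∀ m n : ℤ, (lt (Pre.num m) (Pre.num n) ↔ m < n)

/-- Atoms `p(r)` where `r` is a tuple of precomputed terms. -/
abbrev EGAtom (C : Type) := C × List (Pre C)

/-- An interpretation is a set of atoms over precomputed terms. -/
abbrev Interp (C : Type) := Set (EGAtom C)

/-- Valuations: variables (natural numbers) ↦ precomputed terms. -/
abbrev Val (C : Type) := ℕ → Pre C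

/-- Simultaneously update a valuation on a list of variables by a list of values. -/
def updList {C : Type} : Val C → List ℕ → List (Pre C) → Val C
  | v, [], _ => v
  | v, _ :: _, [] => v
  | v, x :: xs, r :: rs => Function.update (updList v xs rs) x r

/-! ### Terms -/

/-- Terms over symbolic constants `C` and operation names `O`. -/
inductive Term (C O : Type) : Type where
  | num (n : ℤ)
  | sym (c : C)
  | var (x : ℕ)
  | inf
  | sup
  | app (f : C) (ts : List (Term C O))
  | op (o : O) (ts : List (Term C O))
  | interval (t₁ t₂ : Term C O)

mutual
/-- The list of variables occurring in a term. -/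
def Term.varList {C O : Type} : Term C O → List ℕ
  | .num _ => []
  | .sym _ => []
  | .var x => [x]
  | .inf => []
  | .sup => []
  | .app _ ts => Term.varListL ts
  | .op _ ts => Term.varListL ts
  | .interval t₁ t₂ => t₁.varList ++ t₂.varList

def Term.varListL {C O : Type} : List (Term C O) → List ℕ
  | [] => []
  | t :: ts => t.varList ++ Term.varListL ts
end

/-- A term (or tuple of terms, etc.) is ground if it contains no variables. -/
def Term.Ground {C O : Type} (t : Term C O) : Prop := t.varList = []

mutual
/-- The set of values of a term under a valuation `v` (for a ground term this
is the set `[t]` of its values, independent of `v`). `opFun` gives the partial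
integer function denoted by each operation name. -/
def Term.val {C O : Type} (opFun : O → List ℤ → Option ℤ) (v : Val C) :
    Term C O → Set (Pre C)
  | .num n => {Pre.num n}
  | .sym c => {Pre.sym c}
  | .var x => {v x}
  | .inf => {Pre.inf}
  | .sup => {Pre.sup}
  | .app f ts => {r | ∃ rs : List (Pre C), Term.vals opFun v ts rs ∧ r = Pre.app f rs}
  | .op o ts => {r | ∃ ks : List ℤ, Term.vals opFun v ts (ks.map Pre.num) ∧
      ∃ m : ℤ, opFun o ks = some m ∧ r = Pre.num m}
  | .interval t₁ t₂ => {r | ∃ k₁ k₂ m : ℤ, Pre.num k₁ ∈ Term.val opFun v t₁ ∧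
      Pre.num k₂ ∈ Term.val opFun v t₂ ∧ k₁ ≤ m ∧ m ≤ k₂ ∧ r = Pre.num m}

/-- `Term.vals opFun v ts rs` : the tuple `rs` of precomputed terms is a tuple of
values of the tuple `ts` of terms (componentwise). -/
def Term.vals {C O : Type} (opFun : O → List ℤ → Option ℤ) (v : Val C) :
    List (Term C O) → List (Pre C) → Prop
  | [], rs => rs = []
  | t :: ts, rs => ∃ r rs', rs = r :: rs' ∧ r ∈ Term.val opFun v t ∧ Term.vals opFun v ts rs'
end

mutual
/-- Embedding of precomputed terms into terms. -/
def Pre.toTerm {C O : Type} : Pre C → Term C O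
  | .inf => .inf
  | .sup => .sup
  | .num n => .num n
  | .sym c => .sym c
  | .app f rs => .app f (Pre.toTermL rs)

def Pre.toTermL {C O : Type} : List (Pre C) → List (Term C O)
  | [] => []
  | r :: rs => Pre.toTerm r :: Pre.toTermL rs
end


/-! ### Formulas with aggregates -/

mutual
/-- Arguments of the extended (aggregate) language. -/
inductive AArg (C O A : Type) : Type where
  | num (n : ℤ)
  | sym (c : C)
  | var (x : ℕ)
  | inf
  | sup
  | app (f : C) (args : List (AArg C O A))
  | agg (a : A) (xs : List ℕ) (F : AFml C O A)

/-- Formulas of the extended (aggregate) first-order language over the domain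
of precomputed terms. -/
inductive AFml (C O A : Type) : Type where
  | atom (p : C) (args : List (AArg C O A))
  | cmp (rel : Rel) (a₁ a₂ : AArg C O A)
  | mem (a : AArg C O A) (t : Term C O)
  | bot
  | impl (F G : AFml C O A)
  | all (x : ℕ) (F : AFml C O A)
end

section Sem
variable {C O A : Type}
variable (opFun : O → List ℤ → Option ℤ)
variable (aggFun : A → Set (List (Pre C)) → Pre C)
variable (lt : Pre C → Pre C → Prop)

mutual
/-- The precomputed term denoted by an argument (joint recursion with `AFml.sat`). -/
def AArg.eval (I : Interp C) : Val C → AArg C O A → Pre C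
  | _, .num n => Pre.num n
  | _, .sym c => Pre.sym c
  | v, .var x => v x
  | _, .inf => Pre.inf
  | _, .sup => Pre.sup
  | v, .app f args => Pre.app f (AArg.evalL I v args)
  | v, .agg a xs F => aggFun a
      {rs : List (Pre C) | rs.length = xs.length ∧ AFml.sat I (updList v xs rs) F}

def AArg.evalL (I : Interp C) : Val C → List (AArg C O A) → List (Pre C)
  | _, [] => []
  | v, a :: as => AArg.eval I v a :: AArg.evalL I v as

/-- Satisfaction of a formula by an interpretation `I` under a valuation `v`. -/
def AFml.sat (I : Interp C) : Val C → AFml C O A → Prop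
  | v, .atom p args => (p, AArg.evalL I v args) ∈ I
  | v, .cmp rel a₁ a₂ => Rel.eval lt rel (AArg.eval I v a₁) (AArg.eval I v a₂)
  | v, .mem a t => AArg.eval I v a ∈ Term.val opFun v t
  | _, .bot => False
  | v, .impl F G => AFml.sat I v F → AFml.sat I v G
  | v, .all x F => ∀ r : Pre C, AFml.sat I (Function.update v x r) F
end

end Sem
/-! ### Infinitary propositional formulas -/

/-- Infinitary propositional formulas over a type `α` of atoms: atoms, `⊥`,
conjunctions and disjunctions of arbitrary families of formulas, implication. -/
inductive IForm (α : Type) : Type 1 where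
  | atom (a : α)
  | bot
  | conj (ι : Type) (f : ι → IForm α)
  | disj (ι : Type) (f : ι → IForm α)
  | impl (F G : IForm α)

namespace IForm

variable {α : Type}

/-- `⊤` as the empty conjunction. -/
def top : IForm α := conj Empty (fun e => e.elim)
def neg (F : IForm α) : IForm α := impl F bot
def and (F G : IForm α) : IForm α := conj Bool (fun b => cond b F G)
def or (F G : IForm α) : IForm α := disj Bool (fun b => cond b F G)
def conjList (l : List (IForm α)) : IForm α := conj (Fin l.length) (fun i => l.get i)

/-- Classical satisfaction of infinitary formulas. -/
def sat (I : Set α) : IForm α → Prop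
  | atom a => a ∈ I
  | bot => False
  | conj _ f => ∀ i, sat I (f i)
  | disj _ f => ∃ i, sat I (f i)
  | impl F G => sat I F → sat I G

open Classical in
/-- The Ferraris reduct of an infinitary formula relative to an interpretation:
every (maximal) subformula not satisfied by `I` is replaced by `⊥`. -/
noncomputable def reduct (I : Set α) : IForm α → IForm α
  | atom a => if a ∈ I then atom a else bot
  | bot => bot
  | conj ι f => conj ι (fun i => reduct I (f i))
  | disj ι f => disj ι (fun i => reduct I (f i))
  | impl F G => if sat I (impl F G) then impl (reduct I F) (reduct I G) else bot

/-- `I` is a stable model of `F` (Ferraris semantics for infinitary formulas):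
`I` is a minimal model of the reduct `F^I`. -/
def stable (I : Set α) (F : IForm α) : Prop :=
  sat I (reduct I F) ∧ ∀ J : Set α, J ⊆ I → sat J (reduct I F) → J = I

/-- Satisfaction in the infinitary logic of here-and-there `HT^∞`, for an
HT-interpretation given by `J ⊆ I` ("here" `J`, "there" `I`). -/
def satHT (J I : Set α) : IForm α → Prop
  | atom a => a ∈ J
  | bot => False
  | conj _ f => ∀ i, satHT J I (f i)
  | disj _ f => ∃ i, satHT J I (f i)
  | impl F G => (satHT J I F → satHT J I G) ∧ (sat I F → sat I G)

/-- Strong equivalence of infinitary formulas, i.e. equivalence in `HT^∞`. -/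
def HTEquiv (F G : IForm α) : Prop :=
  ∀ J I : Set α, J ⊆ I → (satHT J I F ↔ satHT J I G) ∧ (sat I F ↔ sat I G)

mutual
/-- Positive nonnegated atoms of an infinitary formula. -/
def Pnn : IForm α → Set α
  | atom a => {a}
  | bot => ∅
  | conj _ f => ⋃ i, Pnn (f i)
  | disj _ f => ⋃ i, Pnn (f i)
  | impl _ bot => ∅
  | impl G H => Nnn G ∪ Pnn H

/-- Negative nonnegated atoms of an infinitary formula. -/
def Nnn : IForm α → Set α
  | atom _ => ∅
  | bot => ∅
  | conj _ f => ⋃ i, Nnn (f i)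
  | disj _ f => ⋃ i, Nnn (f i)
  | impl _ bot => ∅
  | impl G H => Pnn G ∪ Nnn H
end

end IForm

/-! ### Infinitary programs -/

/-- An infinitary rule `F → A`. -/
structure IRule (α : Type) : Type 1 where
  body : IForm α
  head : α

/-- An infinitary program: a conjunction (represented as a set) of infinitary rules. -/
abbrev IProg (α : Type) := Set (IRule α)

def IRule.toForm {α : Type} (r : IRule α) : IForm α := .impl r.body (.atom r.head)

namespace IProg
variable {α : Type}

/-- `I` satisfies the program (i.e., the conjunction of its rules). -/
def sat (I : Set α) (P : IProg α) : Prop := ∀ r ∈ P, IForm.sat I r.toForm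

/-- `I` is a stable model of the program, i.e., of the conjunction of its rules:
`I` is a minimal model of the reduct of that conjunction. -/
def stable (I : Set α) (P : IProg α) : Prop :=
  (∀ r ∈ P, IForm.sat I (IForm.reduct I r.toForm)) ∧
  ∀ J : Set α, J ⊆ I → (∀ r ∈ P, IForm.sat J (IForm.reduct I r.toForm)) → J = I

/-- `I` is supported by the program. -/
def supported (I : Set α) (P : IProg α) : Prop :=
  ∀ a ∈ I, ∃ r ∈ P, r.head = a ∧ IForm.sat I r.body

/-- `I` satisfies the completion of `P`, with signature (set of atoms) `S`:
the conjunction over all atoms `A ∈ S` of `A ↔ ⋁ (P|_A)`. -/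
def satCompletionOn (S : Set α) (I : Set α) (P : IProg α) : Prop :=
  ∀ a ∈ S, (a ∈ I ↔ ∃ r ∈ P, r.head = a ∧ IForm.sat I r.body)

/-- `B` is a parent of `A` relative to `P` and `I`. -/
def parent (P : IProg α) (I : Set α) (B A : α) : Prop :=
  A ∈ I ∧ B ∈ I ∧ ∃ r ∈ P, r.head = A ∧ IForm.sat I r.body ∧ B ∈ IForm.Pnn r.body

/-- `P` is tight on `I`: there is no infinite sequence of elements of `I` in
which each element is followed by one of its parents. -/
def tightOn (P : IProg α) (I : Set α) : Prop :=
  ¬ ∃ f : ℕ → α, (∀ i, f i ∈ I) ∧ ∀ i, parent P I (f (i + 1)) (f i)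

end IProg
/-! ### Programs -/

/-- A literal: an atom `p(t₁,…,tₙ)` (`pos = true`) or such an atom preceded
by `not` (`pos = false`). -/
structure Lit (C O : Type) : Type where
  pos : Bool
  pred : C
  args : List (Term C O)

/-- A comparison `t₁ ≺ t₂`. -/
structure Comp (C O : Type) : Type where
  rel : Rel
  lhs : Term C O
  rhs : Term C O

/-- An element of the condition of an aggregate expression: a literal or comparison. -/
abbrev CondElem (C O : Type) := Lit C O ⊕ Comp C O

def Lit.varList {C O : Type} (l : Lit C O) : List ℕ := Term.varListL l.args
def Comp.varList {C O : Type} (c : Comp C O) : List ℕ := c.lhs.varList ++ c.rhs.varList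
def CondElem.varList {C O : Type} : CondElem C O → List ℕ :=
  Sum.elim Lit.varList Comp.varList

/-- An aggregate expression `α{t : C} ≺ s`, where `s` is a variable or a
precomputed term. -/
structure AggExpr (C O A : Type) : Type where
  name : A
  ts : List (Term C O)
  cond : List (CondElem C O)
  rel : Rel
  bound : ℕ ⊕ Pre C

def AggExpr.lhsVarList {C O A : Type} (E : AggExpr C O A) : List ℕ :=
  Term.varListL E.ts ++ E.cond.flatMap CondElem.varList

def boundVarList {C : Type} : ℕ ⊕ Pre C → List ℕ
  | .inl x => [x]
  | .inr _ => []

def AggExpr.varList {C O A : Type} (E : AggExpr C O A) : List ℕ :=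
  E.lhsVarList ++ boundVarList E.bound

/-- An aggregate expression is closed if its bound `s` is ground
(i.e., a precomputed term). -/
def AggExpr.ClosedBound {C O A : Type} (E : AggExpr C O A) : Prop :=
  ∃ r : Pre C, E.bound = Sum.inr r

/-- A conjunctive term of a rule body. -/
inductive BElem (C O A : Type) : Type where
  | lit (l : Lit C O)
  | comp (c : Comp C O)
  | agg (E : AggExpr C O A)

def BElem.varList {C O A : Type} : BElem C O A → List ℕ
  | .lit l => l.varList
  | .comp c => c.varList
  | .agg E => E.varList

/-- A body element suitable for the translation `τ`: a ground literal,
a ground comparison, or a closed aggregate expression. -/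
def BElem.ClosedC {C O A : Type} : BElem C O A → Prop
  | .lit l => l.varList = []
  | .comp c => c.varList = []
  | .agg E => E.ClosedBound

/-- The head of a rule. -/
inductive Head (C O : Type) : Type where
  | basic (p : C) (ts : List (Term C O))
  | choice (p : C) (ts : List (Term C O))
  | empty

def Head.varList {C O : Type} : Head C O → List ℕ
  | .basic _ ts => Term.varListL ts
  | .choice _ ts => Term.varListL ts
  | .empty => []

/-- A rule `Head ← Body`. -/
structure Rule (C O A : Type) : Type where
  head : Head C O
  body : List (BElem C O A)

def Rule.varList {C O A : Type} (R : Rule C O A) : List ℕ :=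
  R.head.varList ++ R.body.flatMap BElem.varList

/-- The variables with an occurrence in the rule outside the left-hand sides
`α{t : C}` of aggregate expressions (head, literal and comparison conjuncts,
and bounds of aggregate expressions); these are the global variables. -/
def Rule.globalList {C O A : Type} (R : Rule C O A) : List ℕ :=
  (R.head.varList ++ R.body.flatMap (fun b =>
    match b with
    | .lit l => l.varList
    | .comp c => c.varList
    | .agg E => boundVarList E.bound)).dedup

/-- The local variables of a rule: those occurring in the rule, all of whose
occurrences are inside left-hand sides of aggregate expressions of its body. -/
def Rule.localList {C O A : Type} (R : Rule C O A) : List ℕ :=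
  ((R.body.flatMap (fun b =>
    match b with
    | .agg E => E.lhsVarList
    | _ => [])).dedup).filter (fun x => x ∉ R.globalList)

/-- A rule is closed if all its variables are local. -/
def Rule.Closed {C O A : Type} (R : Rule C O A) : Prop := R.globalList = []

/-! ### Predicate symbol occurrences, vocabulary, dependency graph -/

def Lit.hasPred {C O : Type} (p : C) (n : ℕ) (l : Lit C O) : Prop :=
  l.pred = p ∧ l.args.length = n

def CondElem.hasPred {C O : Type} (p : C) (n : ℕ) : CondElem C O → Prop
  | .inl l => l.hasPred p n
  | .inr _ => False

def AggExpr.hasPred {C O A : Type} (p : C) (n : ℕ) (E : AggExpr C O A) : Prop :=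
  ∃ ce ∈ E.cond, CondElem.hasPred p n ce

/-- The predicate symbol `p/n` occurs in a body element. -/
def BElem.hasPred {C O A : Type} (p : C) (n : ℕ) : BElem C O A → Prop
  | .lit l => l.hasPred p n
  | .comp _ => False
  | .agg E => E.hasPred p n

/-- The predicate symbol `p/n` occurs in a positive literal or in an aggregate
expression (condition (ii′)). -/
def BElem.hasPosOrAggPred {C O A : Type} (p : C) (n : ℕ) : BElem C O A → Prop
  | .lit l => l.pos = true ∧ l.hasPred p n
  | .comp _ => False
  | .agg E => E.hasPred p n

def Head.hasPred {C O : Type} (p : C) (n : ℕ) : Head C O → Prop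
  | .basic q ts => q = p ∧ ts.length = n
  | .choice q ts => q = p ∧ ts.length = n
  | .empty => False

/-- The predicate symbol `p/n` occurs in the rule `R`. -/
def Rule.hasPredSym {C O A : Type} (p : C) (n : ℕ) (R : Rule C O A) : Prop :=
  R.head.hasPred p n ∨ ∃ e ∈ R.body, BElem.hasPred p n e

/-- The vocabulary of a program: all atoms `p(r)` with `r` a tuple of `n`
precomputed terms and `p/n` occurring in the program. -/
def vocab {C O A : Type} (Γ : Set (Rule C O A)) : Set (EGAtom C) :=
  {a | ∃ R ∈ Γ, Rule.hasPredSym a.1 a.2.length R}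

/-- The edge relation of the dependency graph `G_Γ` on predicate symbols. -/
def DepEdge {C O A : Type} (Γ : Set (Rule C O A)) (q p : C × ℕ) : Prop :=
  ∃ R ∈ Γ, R.head.hasPred q.1 q.2 ∧ ∃ e ∈ R.body, BElem.hasPosOrAggPred p.1 p.2 e

/-- A program is tight if its dependency graph is acyclic. -/
def EGTight {C O A : Type} (Γ : Set (Rule C O A)) : Prop :=
  ∀ s : C × ℕ, ¬ Relation.TransGen (DepEdge Γ) s s


/-! ### Embeddings and aggregate-freeness -/

mutual
/-- Embedding of precomputed terms into arguments of the extended language. -/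
def Pre.toAArg {C O A : Type} : Pre C → AArg C O A
  | .inf => .inf
  | .sup => .sup
  | .num n => .num n
  | .sym c => .sym c
  | .app f rs => .app f (Pre.toAArgL rs)

def Pre.toAArgL {C O A : Type} : List (Pre C) → List (AArg C O A)
  | [] => []
  | r :: rs => Pre.toAArg r :: Pre.toAArgL rs
end

mutual
/-- The number of occurrences of aggregate names in an argument;
an argument is aggregate-free iff this is `0`. -/
def AArg.countAgg {C O A : Type} : AArg C O A → ℕ
  | .num _ => 0
  | .sym _ => 0
  | .var _ => 0
  | .inf => 0
  | .sup => 0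
  | .app _ args => AArg.countAggL args
  | .agg _ _ F => F.countAgg + 1

def AArg.countAggL {C O A : Type} : List (AArg C O A) → ℕ
  | [] => 0
  | a :: as => a.countAgg + AArg.countAggL as

def AFml.countAgg {C O A : Type} : AFml C O A → ℕ
  | .atom _ args => AArg.countAggL args
  | .cmp _ a₁ a₂ => a₁.countAgg + a₂.countAgg
  | .mem a _ => a.countAgg
  | .bot => 0
  | .impl F G => F.countAgg + G.countAgg
  | .all _ F => F.countAgg
end

/-- An argument contains no aggregate names. -/
def AArg.AggFree {C O A : Type} (a : AArg C O A) : Prop := a.countAgg = 0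

mutual
/-- An aggregate-free argument, viewed as a term (the `agg` case is junk and
is never relevant for aggregate-free arguments). -/
def AArg.toTerm {C O A : Type} : AArg C O A → Term C O
  | .num n => .num n
  | .sym c => .sym c
  | .var x => .var x
  | .inf => .inf
  | .sup => .sup
  | .app f args => .app f (AArg.toTermL args)
  | .agg _ _ _ => .inf

def AArg.toTermL {C O A : Type} : List (AArg C O A) → List (Term C O)
  | [] => []
  | a :: as => a.toTerm :: AArg.toTermL as
end

/-! ### Abbreviated connectives of the extended first-order language -/

namespace AFml
variable {C O A : Type}

def negF (F : AFml C O A) : AFml C O A := .impl F .bot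
def topF : AFml C O A := negF .bot
def andF (F G : AFml C O A) : AFml C O A := .impl (.impl F (.impl G .bot)) .bot
def orF (F G : AFml C O A) : AFml C O A := .impl (negF F) G
def iffF (F G : AFml C O A) : AFml C O A := andF (.impl F G) (.impl G F)
def exF (x : ℕ) (F : AFml C O A) : AFml C O A := negF (.all x (negF F))
def andList (l : List (AFml C O A)) : AFml C O A := l.foldr andF topF
def orList (l : List (AFml C O A)) : AFml C O A := l.foldr orF .bot
def exList (xs : List ℕ) (F : AFml C O A) : AFml C O A := xs.foldr exF F
def allList (xs : List ℕ) (F : AFml C O A) : AFml C O A := xs.foldr .all F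

end AFml

/-! ### The translation φ (formula representations) -/

/-- A variable index strictly greater than every element of `l`
(used to pick new/fresh variables). -/
def freshVar (l : List ℕ) : ℕ := l.foldr max 0 + 1

/-- The bound `s` of an aggregate expression, as a term. -/
def boundTerm {C O : Type} : ℕ ⊕ Pre C → Term C O
  | .inl x => .var x
  | .inr r => r.toTerm

section Phi
variable {C O A : Type}

/-- `φ` of a literal: `∃X(X ∈ t ∧ p(X))`, resp. `∃X(X ∈ t ∧ ¬p(X))`,
with `X` a tuple of new variables. -/
def phiLit (l : Lit C O) : AFml C O A :=
  let n := freshVar l.varList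
  let ws := (List.range l.args.length).map (· + n)
  AFml.exList ws (AFml.andF
    (AFml.andList ((ws.zip l.args).map (fun q => AFml.mem (AArg.var q.1) q.2)))
    (if l.pos then AFml.atom l.pred (ws.map AArg.var)
     else AFml.negF (AFml.atom l.pred (ws.map AArg.var))))

/-- `φ` of a comparison: `∃X₁X₂(X₁ ∈ t₁ ∧ X₂ ∈ t₂ ∧ X₁ ≺ X₂)`. -/
def phiComp (c : Comp C O) : AFml C O A :=
  let n := freshVar c.varList
  AFml.exF n (AFml.exF (n + 1) (AFml.andF (AFml.mem (AArg.var n) c.lhs)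
    (AFml.andF (AFml.mem (AArg.var (n + 1)) c.rhs)
      (AFml.cmp c.rel (AArg.var n) (AArg.var (n + 1))))))

def phiCondElem : CondElem C O → AFml C O A :=
  Sum.elim phiLit phiComp

/-- `φ` of a conjunction of literals and comparisons. -/
def phiCond (cond : List (CondElem C O)) : AFml C O A :=
  AFml.andList (cond.map phiCondElem)

/-- `φ^X` of an aggregate expression `α{t : C} ≺ s` (with `X = xs` the
variables treated as local):
`∃Y(α{Z | ∃X(Z ∈ t ∧ φC)} ≺ Y ∧ Y ∈ s)`, with `Z`, `Y` new variables. -/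
def phiAgg (xs : List ℕ) (E : AggExpr C O A) : AFml C O A :=
  let n := freshVar (xs ++ E.varList)
  let zs := (List.range E.ts.length).map (· + (n + 1))
  AFml.exF n (AFml.andF
    (AFml.cmp E.rel
      (AArg.agg E.name zs
        (AFml.exList xs (AFml.andF
          (AFml.andList ((zs.zip E.ts).map (fun q => AFml.mem (AArg.var q.1) q.2)))
          (phiCond E.cond))))
      (AArg.var n))
    (AFml.mem (AArg.var n) (boundTerm E.bound)))

/-- `φ^X` of a body element, where `xs` is the list of variables treated as local. -/
def phiBElem (xs : List ℕ) : BElem C O A → AFml C O A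
  | .lit l => phiLit l
  | .comp c => phiComp c
  | .agg E => phiAgg xs E

/-- `φ^X` of a body (a conjunction of literals, comparisons and aggregate
expressions), where `xs` is the list of variables treated as local. -/
def phiBody (xs : List ℕ) (b : List (BElem C O A)) : AFml C O A :=
  AFml.andList (b.map (phiBElem xs))

/-- The formula representation of a constraint `← Body`: `¬ φ^X(Body)`,
where `X` is the list of local variables of the constraint. -/
def phiConstraintRep (R : Rule C O A) : AFml C O A :=
  AFml.negF (phiBody R.localList R.body)

/-- `V ∈ t` for a tuple `V` of variables and a tuple `t` of terms. -/
def memConj (Vs : List ℕ) (ts : List (Term C O)) : AFml C O A :=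
  AFml.andList ((Vs.zip ts).map (fun q => AFml.mem (AArg.var q.1) q.2))

/-- The antecedent `Fᵢ` of the formula representation `Fᵢ → p(V)` of a basic or
choice rule, where `Vs` is the chosen tuple `V` of new variables:
for a basic rule `V ∈ t ∧ φ^X(Body)`, for a choice rule
`V ∈ t ∧ φ^X(Body) ∧ p(V)`, with `X` the local variables of the rule. -/
def ruleAnte (Vs : List ℕ) (R : Rule C O A) : AFml C O A :=
  match R.head with
  | .basic _ ts => AFml.andF (memConj Vs ts) (phiBody R.localList R.body)
  | .choice p ts => AFml.andF (memConj Vs ts)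
      (AFml.andF (phiBody R.localList R.body) (AFml.atom p (Vs.map AArg.var)))
  | .empty => AFml.bot

/-- Does `R` belong to the definition of `p/n` (a basic or choice rule whose
head is of the form `p(t₁,…,tₙ)` or `{p(t₁,…,tₙ)}`)? -/
def definesB [DecidableEq C] (p : C) (n : ℕ) (R : Rule C O A) : Bool :=
  match R.head with
  | .basic q ts => decide (q = p ∧ ts.length = n)
  | .choice q ts => decide (q = p ∧ ts.length = n)
  | .empty => false

/-- The completed definition of the predicate symbol `p/n` in the finite
program `Γ`: `∀V(p(V) ↔ ⋁ᵢ ∃Uᵢ Fᵢ)`, where the `Fᵢ` come from the formula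
representations of the rules defining `p/n`, `V` is a tuple of new variables
chosen in the same way for all `i`, and `Uᵢ` is the list of free variables of
`Fᵢ` not in `V` (i.e., the global variables of the corresponding rule). -/
def completedDef [DecidableEq C] (Γ : List (Rule C O A)) (p : C) (n : ℕ) : AFml C O A :=
  let base := freshVar (Γ.flatMap Rule.varList)
  let Vs := (List.range n).map (· + base)
  AFml.allList Vs (AFml.iffF (AFml.atom p (Vs.map AArg.var))
    (AFml.orList ((Γ.filter (definesB p n)).map
      (fun R => AFml.exList R.globalList (ruleAnte Vs R)))))

end Phi

/-! ### The translation τ (grounding into infinitary formulas) -/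

section Tau
variable {C O A : Type}
variable (opFun : O → List ℤ → Option ℤ)
variable (aggFun : A → Set (List (Pre C)) → Pre C)
variable (lt : Pre C → Pre C → Prop)

/-- `τ` of a (ground instance of a) literal: `⋁_{r ∈ [t]} p(r)`, resp.
`⋁_{r ∈ [t]} ¬p(r)`; variables are evaluated by the valuation `v`. -/
def tauLit (v : Val C) (l : Lit C O) : IForm (EGAtom C) :=
  if l.pos then
    .disj {rs : List (Pre C) // Term.vals opFun v l.args rs}
      (fun rs => .atom (l.pred, rs.val))
  else
    .disj {rs : List (Pre C) // Term.vals opFun v l.args rs}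
      (fun rs => .neg (.atom (l.pred, rs.val)))

open Classical in
/-- `τ` of a (ground instance of a) comparison: `⊤` if the relation holds
between some values of the two terms, `⊥` otherwise. -/
noncomputable def tauComp (v : Val C) (c : Comp C O) : IForm (EGAtom C) :=
  if ∃ r₁ ∈ Term.val opFun v c.lhs, ∃ r₂ ∈ Term.val opFun v c.rhs,
      Rel.eval lt c.rel r₁ r₂
  then .top else .bot

noncomputable def tauCondElem (v : Val C) : CondElem C O → IForm (EGAtom C)
  | .inl l => tauLit opFun v l
  | .inr c => tauComp opFun lt v c

/-- `τ` of a conjunction of (ground instances of) literals and comparisons. -/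
noncomputable def tauCond (v : Val C) (cond : List (CondElem C O)) : IForm (EGAtom C) :=
  IForm.conjList (cond.map (tauCondElem opFun lt v))

/-- The value of the bound `s` of an aggregate expression under a valuation. -/
def boundVal (v : Val C) : ℕ ⊕ Pre C → Pre C
  | .inl x => v x
  | .inr r => r

/-- Tuples of precomputed terms matching the variable list `xs`. -/
def AggTuple (C : Type) (xs : List ℕ) : Type := {rs : List (Pre C) // rs.length = xs.length}

/-- `Δ` justifies the aggregate expression `E` (relative to the valuation `v`
and the list `xs` of its variables): `≺` holds between `α̂([Δ])` and `s`,
where `[Δ]` is the union of the value sets of the instantiated tuples `t`. -/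
def Justifies (v : Val C) (xs : List ℕ) (E : AggExpr C O A)
    (Δ : Set (AggTuple C xs)) : Prop :=
  Rel.eval lt E.rel
    (aggFun E.name
      {q | ∃ rs ∈ Δ, Term.vals opFun (updList v xs rs.val) E.ts q})
    (boundVal v E.bound)

/-- `τ` of a closed aggregate expression `E`, relative to the list `xs` of its
variables: the conjunction, over all subsets `Δ` of the set `A` of tuples of
precomputed terms matching `xs` that do not justify `E`, of the implications
`(⋀_{r∈Δ} τ(C^X_r)) → (⋁_{r∈A∖Δ} τ(C^X_r))`. -/
noncomputable def tauAgg (v : Val C) (xs : List ℕ) (E : AggExpr C O A) :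
    IForm (EGAtom C) :=
  .conj {Δ : Set (AggTuple C xs) // ¬ Justifies opFun aggFun lt v xs E Δ}
    (fun Δ => .impl
      (.conj {rs : AggTuple C xs // rs ∈ Δ.val}
        (fun rs => tauCond opFun lt (updList v xs rs.val.val) E.cond))
      (.disj {rs : AggTuple C xs // rs ∉ Δ.val}
        (fun rs => tauCond opFun lt (updList v xs rs.val.val) E.cond)))

/-- `τ` of a closed aggregate expression, with `X` the list of variables
occurring in it. -/
noncomputable def tauAggE (v : Val C) (E : AggExpr C O A) : IForm (EGAtom C) :=
  tauAgg opFun aggFun lt v (E.varList.dedup) E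

/-- `τ` of a body element of (an instance of) a rule whose list of local
variables is `loc`; in the instance, the variables occurring in an aggregate
expression `E` are the variables of `E` that are local in the rule. -/
noncomputable def tauBElem (v : Val C) (loc : List ℕ) : BElem C O A → IForm (EGAtom C)
  | .lit l => tauLit opFun v l
  | .comp c => tauComp opFun lt v c
  | .agg E => tauAgg opFun aggFun lt v (E.varList.dedup.filter (· ∈ loc)) E

/-- `τ` of the body of (an instance of) a rule with local variable list `loc`. -/
noncomputable def tauBody (v : Val C) (loc : List ℕ) (b : List (BElem C O A)) :
    IForm (EGAtom C) :=
  IForm.conjList (b.map (tauBElem opFun aggFun lt v loc))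

/-- `τ` of (an instance, given by the valuation `v`, of) a rule. -/
noncomputable def tauRule (v : Val C) (R : Rule C O A) : IForm (EGAtom C) :=
  match R.head with
  | .basic p ts => .impl (tauBody opFun aggFun lt v R.localList R.body)
      (.conj {rs : List (Pre C) // Term.vals opFun v ts rs}
        (fun rs => .atom (p, rs.val)))
  | .choice p ts => .impl (tauBody opFun aggFun lt v R.localList R.body)
      (.conj {rs : List (Pre C) // Term.vals opFun v ts rs}
        (fun rs => .or (.atom (p, rs.val)) (.neg (.atom (p, rs.val)))))
  | .empty => .neg (tauBody opFun aggFun lt v R.localList R.body)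

/-- `τΓ`: the conjunction of `τR` over all instances `R` of the rules of `Γ`
(instances given by valuations of the global variables). -/
noncomputable def tauProg (Γ : Set (Rule C O A)) : IForm (EGAtom C) :=
  .conj ({R : Rule C O A // R ∈ Γ} × Val C)
    (fun z => tauRule opFun aggFun lt z.2 z.1.val)

/-- Stable models of an EG program: stable models of `τΓ`. -/
noncomputable def EGStable (I : Interp C) (Γ : Set (Rule C O A)) : Prop :=
  IForm.stable I (tauProg opFun aggFun lt Γ)

/-- The infinitary program `τ₁Γ`: the rules `τ(Body) → p(r)` for all instances
of basic rules of `Γ` and all `r ∈ [t]`, together with the rules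
`τ(Body) ∧ ¬¬p(r) → p(r)` for all instances of choice rules and all `r ∈ [t]`. -/
noncomputable def tau1 (Γ : Set (Rule C O A)) : IProg (EGAtom C) :=
  {ir | ∃ R ∈ Γ, ∃ v : Val C,
    (∃ p ts rs, R.head = Head.basic p ts ∧ Term.vals opFun v ts rs ∧
      ir = ⟨tauBody opFun aggFun lt v R.localList R.body, (p, rs)⟩) ∨
    (∃ p ts rs, R.head = Head.choice p ts ∧ Term.vals opFun v ts rs ∧
      ir = ⟨IForm.and (tauBody opFun aggFun lt v R.localList R.body)
              (IForm.neg (IForm.neg (IForm.atom (p, rs)))), (p, rs)⟩)}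

/-- The infinitary formula `τ₂Γ`: the conjunction of `¬τ(C)` over all
instances `← C` of the constraints of `Γ`. -/
noncomputable def tau2 (Γ : Set (Rule C O A)) : IForm (EGAtom C) :=
  .conj ({R : Rule C O A // R ∈ Γ ∧ R.head = Head.empty} × Val C)
    (fun z => .neg (tauBody opFun aggFun lt z.2 z.1.val.localList z.1.val.body))

/-- `τ` of a closed conjunction of ground literals, ground comparisons and
closed aggregate expressions (each aggregate expression translated relative
to the list of its own variables). -/
noncomputable def tauBElemC (v : Val C) : BElem C O A → IForm (EGAtom C)
  | .lit l => tauLit opFun v l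
  | .comp c => tauComp opFun lt v c
  | .agg E => tauAggE opFun aggFun lt v E

noncomputable def tauBodyC (v : Val C) (b : List (BElem C O A)) : IForm (EGAtom C) :=
  IForm.conjList (b.map (tauBElemC opFun aggFun lt v))

end Tau

/-! ### Completion of an EG program -/

section Completion
variable {C O A : Type}
variable (opFun : O → List ℤ → Option ℤ)
variable (aggFun : A → Set (List (Pre C)) → Pre C)
variable (lt : Pre C → Pre C → Prop)

/-- `I` satisfies the completion of the finite program `Γ`: the completed
definitions of all predicate symbols occurring in `Γ` together with the
universal closures of the formula representations of all constraints of `Γ`. -/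
def SatCompletion [DecidableEq C] (Γ : List (Rule C O A)) (I : Interp C) : Prop :=
  (∀ (p : C) (n : ℕ), (∃ R ∈ Γ, Rule.hasPredSym p n R) →
    ∀ v : Val C, AFml.sat opFun aggFun lt I v (completedDef Γ p n)) ∧
  (∀ R ∈ Γ, R.head = Head.empty →
    ∀ v : Val C, AFml.sat opFun aggFun lt I v (phiConstraintRep R))

end Completion

/-!
Conjunct by conjunct, both sides say that some tuple of values of the ground arguments makes
the literal (resp. comparison) true. On the first-order side the existentially quantified
variables are fresh and pairwise distinct, so the valuation reached after instantiating them
reads the chosen tuple back, and groundness makes the values of the terms independent of the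
valuation.
-/

section Ground
variable {C O : Type} (opFun : O → List ℤ → Option ℤ)

mutual
theorem Term.val_eq_of_varList_eq_nil (v v' : Val C) :
    ∀ t : Term C O, t.varList = [] → Term.val opFun v t = Term.val opFun v' t
  | .num _, _ | .sym _, _ | .inf, _ | .sup, _ => rfl
  | .var _, h => by simp [Term.varList] at h
  | .app _ ts, h | .op _ ts, h => by
    have hts := Term.vals_iff_of_varListL_eq_nil v v' ts (by simpa [Term.varList] using h)
    simp only [Term.val, hts]
  | .interval t₁ t₂, h => by
    rw [Term.varList, List.append_eq_nil_iff] at h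
    simp only [Term.val, Term.val_eq_of_varList_eq_nil v v' t₁ h.1,
      Term.val_eq_of_varList_eq_nil v v' t₂ h.2]

theorem Term.vals_iff_of_varListL_eq_nil (v v' : Val C) :
    ∀ ts : List (Term C O), Term.varListL ts = [] →
      ∀ rs, Term.vals opFun v ts rs ↔ Term.vals opFun v' ts rs
  | [], _, _ => Iff.rfl
  | t :: ts, h, rs => by
    rw [Term.varListL, List.append_eq_nil_iff] at h
    simp only [Term.vals, Term.val_eq_of_varList_eq_nil v v' t h.1,
      Term.vals_iff_of_varListL_eq_nil v v' ts h.2]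
end

lemma Term.vals_length : ∀ {u : Val C} {ts : List (Term C O)} {rs : List (Pre C)},
    Term.vals opFun u ts rs → rs.length = ts.length
  | _, [], _, h => by rw [Term.vals] at h; rw [h]; rfl
  | _, _ :: _, _, ⟨_, _, rfl, _, h⟩ => by simp [Term.vals_length h]

end Ground

section FirstOrder
variable {C O A : Type} (opFun : O → List ℤ → Option ℤ)
  (aggFun : A → Set (List (Pre C)) → Pre C) (lt : Pre C → Pre C → Prop)
  (I : Interp C)

namespace AFml

lemma sat_negF (u : Val C) (F : AFml C O A) :
    sat opFun aggFun lt I u (negF F) ↔ ¬ sat opFun aggFun lt I u F := by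
  simp [negF, sat]

lemma sat_andF (u : Val C) (F G : AFml C O A) :
    sat opFun aggFun lt I u (andF F G) ↔
      sat opFun aggFun lt I u F ∧ sat opFun aggFun lt I u G := by
  simp only [andF, sat]
  tauto

lemma sat_andList (u : Val C) (l : List (AFml C O A)) :
    sat opFun aggFun lt I u (andList l) ↔ ∀ G ∈ l, sat opFun aggFun lt I u G := by
  induction l with
  | nil => simp [andList, topF, negF, sat]
  | cons F l ih =>
    simp only [andList, List.foldr] at ih ⊢
    simp [sat_andF, ih]

lemma sat_exF (u : Val C) (x : ℕ) (F : AFml C O A) :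
    sat opFun aggFun lt I u (exF x F) ↔
      ∃ r : Pre C, sat opFun aggFun lt I (Function.update u x r) F := by
  simp [exF, negF, sat]

end AFml

/-- Unlike `updList`, updates `u` at `x₁, x₂, …` in turn, outermost first, as the quantifiers
of `AFml.exList` do. -/
def updSeq : Val C → List ℕ → List (Pre C) → Val C
  | u, [], _ => u
  | u, _ :: _, [] => u
  | u, x :: xs, r :: rs => updSeq (Function.update u x r) xs rs

lemma updSeq_apply_of_not_mem : ∀ (u : Val C) (xs : List ℕ) (rs : List (Pre C)) {y : ℕ},
    y ∉ xs → updSeq u xs rs y = u y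
  | _, [], _, _, _ => rfl
  | _, _ :: _, [], _, _ => rfl
  | u, x :: xs, r :: rs, y, h => by
    rw [List.mem_cons, not_or] at h
    rw [updSeq, updSeq_apply_of_not_mem _ xs rs h.2, Function.update_of_ne h.1]

lemma map_updSeq : ∀ (u : Val C) {xs : List ℕ} {rs : List (Pre C)},
    xs.Nodup → rs.length = xs.length → xs.map (updSeq u xs rs) = rs
  | _, [], [], _, _ => rfl
  | u, x :: xs, r :: rs, hnd, hlen => by
    rw [List.nodup_cons] at hnd
    rw [List.map_cons, updSeq, updSeq_apply_of_not_mem _ xs rs hnd.1, Function.update_self,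
      map_updSeq _ hnd.2 (Nat.succ.inj hlen)]

lemma AFml.sat_exList : ∀ (u : Val C) (xs : List ℕ) (F : AFml C O A),
    sat opFun aggFun lt I u (exList xs F) ↔
      ∃ rs : List (Pre C), rs.length = xs.length ∧
        sat opFun aggFun lt I (updSeq u xs rs) F
  | u, [], F => ⟨fun h => ⟨[], rfl, h⟩, fun ⟨_, _, h⟩ => h⟩
  | u, x :: xs, F => by
    simp only [exList, List.foldr] at *
    rw [sat_exF]
    constructor
    · rintro ⟨r, h⟩
      obtain ⟨rs, hlen, hs⟩ := (sat_exList _ xs F).1 h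
      exact ⟨r :: rs, by simp [hlen], hs⟩
    · rintro ⟨_ | ⟨r, rs⟩, hlen, hs⟩
      · simp at hlen
      · exact ⟨r, (sat_exList _ xs F).2 ⟨rs, Nat.succ.inj hlen, hs⟩⟩

lemma AFml.sat_atom_map_var_updSeq (u : Val C) (p : C) {xs : List ℕ} {rs : List (Pre C)}
    (hnd : xs.Nodup) (hlen : rs.length = xs.length) :
    sat opFun aggFun lt I (updSeq u xs rs) (atom p (xs.map AArg.var) : AFml C O A) ↔
      (p, rs) ∈ I := by
  suffices h : ∀ (w : Val C) (ys : List ℕ),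
      AArg.evalL opFun aggFun lt I w (ys.map AArg.var : List (AArg C O A)) = ys.map w by
    rw [sat, h, map_updSeq u hnd hlen]
  intro w ys
  induction ys with
  | nil => rfl
  | cons y ys ih => simp only [List.map_cons, AArg.evalL, AArg.eval, ih]

lemma AFml.sat_memConj (u : Val C) :
    ∀ {xs : List ℕ} {ts : List (Term C O)}, xs.length = ts.length →
      (sat opFun aggFun lt I u (memConj xs ts : AFml C O A) ↔
        Term.vals opFun u ts (xs.map u))
  | [], [], _ => by simp [memConj, sat_andList, Term.vals]
  | x :: xs, t :: ts, hlen => by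
    have ih := sat_memConj u (xs := xs) (ts := ts) (Nat.succ.inj hlen)
    simp only [memConj, List.zip_cons_cons, List.map_cons, andList, List.foldr] at ih ⊢
    rw [sat_andF, ih]
    simp [sat, AArg.eval, Term.vals]

end FirstOrder

section Translations
variable {C O A : Type} (opFun : O → List ℤ → Option ℤ)
  (aggFun : A → Set (List (Pre C)) → Pre C) (lt : Pre C → Pre C → Prop)
  (I : Interp C)

lemma IForm.sat_conjList {α : Type} (J : Set α) (l : List (IForm α)) :
    sat J (conjList l) ↔ ∀ F ∈ l, sat J F := by
  simp only [conjList, sat, List.forall_mem_iff_get]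

def Lit.Holds (I : Interp C) (l : Lit C O) (rs : List (Pre C)) : Prop :=
  if l.pos then (l.pred, rs) ∈ I else (l.pred, rs) ∉ I

lemma sat_tauLit (v : Val C) (l : Lit C O) :
    IForm.sat I (tauLit opFun v l) ↔ ∃ rs, Term.vals opFun v l.args rs ∧ l.Holds I rs := by
  unfold tauLit Lit.Holds
  split_ifs <;> simp [IForm.sat, IForm.neg]

lemma sat_phiLit (v u : Val C) {l : Lit C O} (hl : l.varList = []) :
    AFml.sat opFun aggFun lt I u (phiLit l : AFml C O A) ↔
      ∃ rs, Term.vals opFun v l.args rs ∧ l.Holds I rs := by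
  set ws := (List.range l.args.length).map (· + freshVar l.varList)
  have hnd : ws.Nodup := List.nodup_range.map fun a b h => by omega
  have hlen : ws.length = l.args.length := by simp [ws]
  set F : AFml C O A := .atom l.pred (ws.map AArg.var)
  have hlit : ∀ rs : List (Pre C), rs.length = ws.length →
      (AFml.sat opFun aggFun lt I (updSeq u ws rs) (if l.pos then F else .negF F) ↔
        l.Holds I rs) := fun rs hrs => by
    unfold Lit.Holds
    split_ifs <;> simp only [F, AFml.sat_negF, AFml.sat_atom_map_var_updSeq _ _ _ _ _ _ hnd hrs]
  change AFml.sat opFun aggFun lt I u (AFml.exList ws (AFml.andF (memConj ws l.args) _)) ↔ _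
  simp only [AFml.sat_exList, AFml.sat_andF, AFml.sat_memConj _ _ _ _ _ hlen]
  refine exists_congr fun rs => ⟨fun ⟨hrs, hvals, hsat⟩ => ?_, fun ⟨hvals, hsat⟩ => ?_⟩
  · rw [map_updSeq u hnd hrs, Term.vals_iff_of_varListL_eq_nil opFun _ v _ hl] at hvals
    exact ⟨hvals, (hlit rs hrs).1 hsat⟩
  · have hrs : rs.length = ws.length := (Term.vals_length opFun hvals).trans hlen.symm
    rw [map_updSeq u hnd hrs, Term.vals_iff_of_varListL_eq_nil opFun _ v _ hl]
    exact ⟨hrs, hvals, (hlit rs hrs).2 hsat⟩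

lemma sat_tauComp (v : Val C) (c : Comp C O) :
    IForm.sat I (tauComp opFun lt v c) ↔ ∃ r₁ ∈ Term.val opFun v c.lhs,
      ∃ r₂ ∈ Term.val opFun v c.rhs, Rel.eval lt c.rel r₁ r₂ := by
  unfold tauComp
  split_ifs with h <;> simp [h, IForm.sat, IForm.top]

lemma sat_phiComp (v u : Val C) {c : Comp C O} (hc : c.varList = []) :
    AFml.sat opFun aggFun lt I u (phiComp c : AFml C O A) ↔ ∃ r₁ ∈ Term.val opFun v c.lhs,
      ∃ r₂ ∈ Term.val opFun v c.rhs, Rel.eval lt c.rel r₁ r₂ := by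
  rw [Comp.varList, List.append_eq_nil_iff] at hc
  have hne : freshVar c.varList ≠ freshVar c.varList + 1 := by omega
  simp only [phiComp, AFml.sat_exF, AFml.sat_andF, AFml.sat, AArg.eval, Function.update_self,
    Function.update_of_ne hne, Term.val_eq_of_varList_eq_nil opFun _ v _ hc.1,
    Term.val_eq_of_varList_eq_nil opFun _ v _ hc.2, exists_and_left]

end Translations

/-- Lemma 1: for any conjunction `C` of ground literals and
ground comparisons, the infinitary formula `τC` is satisfied by exactly the
same interpretations as the first-order formula `φC`. -/
theorem lemma_1 {C O A : Type}
    (opFun : O → List ℤ → Option ℤ)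
    (aggFun : A → Set (List (Pre C)) → Pre C)
    (lt : Pre C → Pre C → Prop) (hlt : PreOrderOK lt)
    (b : List (CondElem C O)) (hground : ∀ ce ∈ b, CondElem.varList ce = [])
    (I : Interp C) (v v' : Val C) :
    IForm.sat I (tauCond opFun lt v b) ↔
      AFml.sat opFun aggFun lt I v' (phiCond b) := by
  rw [tauCond, phiCond, IForm.sat_conjList, AFml.sat_andList]
  simp only [List.forall_mem_map]
  refine forall₂_congr fun ce hce => ?_
  rcases ce with l | c
  · exact (sat_tauLit opFun I v l).trans
      (sat_phiLit opFun aggFun lt I v v' (hground _ hce)).symm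
  · exact (sat_tauComp opFun lt I v c).trans
      (sat_phiComp opFun aggFun lt I v v' (hground _ hce)).symm

end EG
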